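/- arXiv:1703.10723 — 2 statements merged into one kernel-verified Lean document; each statement's English description precedes it below -/
import Mathlib

section
/- Let the Euclidean plane ℝ² be coloured in red and blue so that there is no red ℓ₂ and no blue ℓ₅. If A, B, C, D are four red points forming a congruent copy of the configuration 𝔗₄, then there exists a red point E such that the five points A, B, C, D, E form a congruent copy of the configuration 𝔗₅. -/
/-- The two colours. -/
inductive Color
  | red
  | blue

/-- The Euclidean plane ℝ². -/
abbrev Plane : Type := EuclideanSpace ℝ (Fin 2)

/-- The point of the plane with coordinates `(x, y)`. -/
noncomputable def pt (x y : ℝ) : Plane := (WithLp.equiv 2 (Fin 2 → ℝ)).symm ![x, y]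

/-- There is no red ℓ₂, i.e. no two red points at Euclidean distance 1. -/
def NoRedL2 (c : Plane → Color) : Prop :=
  ∀ x y : Plane, c x = Color.red → c y = Color.red → dist x y ≠ 1

/-- There is a blue ℓ₅: a point `p` and a unit vector `w` such that
`p, p+w, p+2w, p+3w, p+4w` are all blue. -/
def HasBlueL5 (c : Plane → Color) : Prop :=
  ∃ p w : Plane, ‖w‖ = 1 ∧ ∀ i : Fin 5, c (p + (i : ℝ) • w) = Color.blue

/-- The configuration 𝔗₄. -/
noncomputable def T4 : Set Plane :=
  {pt 0 0, pt (3 / 2) (Real.sqrt 3 / 2), pt (3 / 2) (-(Real.sqrt 3 / 2)), pt 3 0}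

/-- The configuration 𝔗₅. -/
noncomputable def T5 : Set Plane :=
  {pt 0 0, pt (3 / 2) (Real.sqrt 3 / 2), pt (3 / 2) (-(Real.sqrt 3 / 2)), pt 3 0,
    pt 3 (Real.sqrt 3)}

/-! Transporting the colouring along the congruence, we may assume the four red points are
𝔗₄ = {O, P, Q, R} itself, with Q = (3/2, -√3/2) and R = (3, 0). The apexes (3, √3), (3, -√3),
(0, -√3) of the equilateral triangles erected outwards on the edges PR, QR, OQ each complete
𝔗₄ to a copy of 𝔗₅, via the identity, the reflection in the x-axis and the half-turn about
(3/2, 0). Suppose all three are blue. The points (1, -√3), (2, -√3) lie at distance 1 from Q,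
so the row (0, -√3), …, (3, -√3) is blue and (4, -√3) must be red. Then (7/2, √3/2), (4, 0)
lie at distance 1 from R and (9/2, -√3/2), (5, -√3) at distance 1 from (4, -√3), so together
with (3, √3) they form a blue ℓ₅. -/

theorem Color.ne_red_iff {v : Color} : v ≠ Color.red ↔ v = Color.blue := by
  cases v <;> simp

@[simp] theorem pt_apply_zero (a b : ℝ) : pt a b 0 = a := rfl
@[simp] theorem pt_apply_one (a b : ℝ) : pt a b 1 = b := rfl

theorem pt_add (a b a' b' : ℝ) : pt a b + pt a' b' = pt (a + a') (b + b') := by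
  ext i; fin_cases i <;> rfl

theorem pt_smul (r a b : ℝ) : r • pt a b = pt (r * a) (r * b) := by
  ext i; fin_cases i <;> rfl

theorem dist_eq_sqrt_coords (p q : Plane) :
    dist p q = √((p 0 - q 0) ^ 2 + (p 1 - q 1) ^ 2) := by
  simp [EuclideanSpace.dist_eq, Fin.sum_univ_two, Real.dist_eq, sq_abs]

theorem dist_pt (a b a' b' : ℝ) : dist (pt a b) (pt a' b') = √((a - a') ^ 2 + (b - b') ^ 2) :=
  dist_eq_sqrt_coords _ _

theorem norm_pt (a b : ℝ) : ‖pt a b‖ = √(a ^ 2 + b ^ 2) := by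
  simp [EuclideanSpace.norm_eq, Fin.sum_univ_two, sq_abs]

theorem NoRedL2.comp {c : Plane → Color} (hc : NoRedL2 c) {f : Plane → Plane} (hf : Isometry f) :
    NoRedL2 (c ∘ f) :=
  fun x y hx hy => hf.dist_eq x y ▸ hc (f x) (f y) hx hy

theorem HasBlueL5.of_comp {c : Plane → Color} (f : Plane ≃ᵢ Plane) (h : HasBlueL5 (c ∘ f)) :
    HasBlueL5 c := by
  obtain ⟨p, w, hw, hblue⟩ := h
  set F := f.toRealAffineIsometryEquiv
  refine ⟨f p, F.linearIsometryEquiv w, by simpa using hw, fun i => ?_⟩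
  have hF : f (p + (i : ℝ) • w) = f p + (i : ℝ) • F.linearIsometryEquiv w := by
    simpa [F, add_comm] using F.map_vadd p ((i : ℝ) • w)
  exact hF ▸ hblue i

theorem NoRedL2.blue_of_dist_eq_one {c : Plane → Color} (hc : NoRedL2 c) {x y : Plane}
    (hx : c x = Color.red) (hxy : dist x y = 1) : c y = Color.blue :=
  Color.ne_red_iff.1 fun hy => hc x y hx hy hxy

theorem hasBlueL5_of_pt {c : Plane → Color} {a b u v : ℝ} (huv : u ^ 2 + v ^ 2 = 1)
    (h : ∀ i : Fin 5, c (pt (a + i * u) (b + i * v)) = Color.blue) : HasBlueL5 c :=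
  ⟨pt a b, pt u v, by rw [norm_pt, huv, Real.sqrt_one], fun i => by rw [pt_smul, pt_add]; exact h i⟩

theorem red_of_four_blue {c : Plane → Color} (hc : ¬HasBlueL5 c) {a b u v : ℝ}
    (huv : u ^ 2 + v ^ 2 = 1) (h0 : c (pt a b) = Color.blue)
    (h1 : c (pt (a + u) (b + v)) = Color.blue) (h2 : c (pt (a + 2 * u) (b + 2 * v)) = Color.blue)
    (h3 : c (pt (a + 3 * u) (b + 3 * v)) = Color.blue) :
    c (pt (a + 4 * u) (b + 4 * v)) = Color.red := by
  by_contra h4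
  refine hc (hasBlueL5_of_pt (a := a) (b := b) huv fun i => ?_)
  fin_cases i <;> norm_num
  all_goals first | assumption | exact Color.ne_red_iff.1 h4

theorem red_apex_of_red {c : Plane → Color} (hred : NoRedL2 c) (hblue : ¬HasBlueL5 c)
    (hQ : c (pt (3 / 2) (-(√3 / 2))) = Color.red) (hR : c (pt 3 0) = Color.red) :
    c (pt 3 √3) = Color.red ∨ c (pt 3 (-√3)) = Color.red ∨ c (pt 0 (-√3)) = Color.red := by
  by_contra! h
  simp only [Color.ne_red_iff] at h
  obtain ⟨hE₁, hE₂, hE₃⟩ := h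
  have hs : √3 ^ 2 = 3 := Real.sq_sqrt (by norm_num)
  have dist_one {a b a' b' : ℝ} (h : (a - a') ^ 2 + (b - b') ^ 2 = 1) :
      dist (pt a b) (pt a' b') = 1 := by
    rw [dist_pt, h, Real.sqrt_one]
  have hF : c (pt 4 (-√3)) = Color.red := by
    simpa using red_of_four_blue hblue (a := 0) (b := -√3) (u := 1) (v := 0) (by norm_num) hE₃
      (hred.blue_of_dist_eq_one hQ (dist_one (by linarith)))
      (hred.blue_of_dist_eq_one hQ (dist_one (by linarith))) (by simpa using hE₂)
  refine hblue (hasBlueL5_of_pt (a := 3) (b := √3) (u := 1 / 2) (v := -(√3 / 2)) (by linarith)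
    fun i => ?_)
  fin_cases i <;> norm_num
  · exact hE₁
  · exact hred.blue_of_dist_eq_one hR (dist_one (by linarith))
  · exact hred.blue_of_dist_eq_one hR (dist_one (by linarith))
  · exact hred.blue_of_dist_eq_one hF (dist_one (by linarith))
  · exact hred.blue_of_dist_eq_one hF (dist_one (by linarith))

noncomputable def reflectX : Plane ≃ᵢ Plane :=
  IsometryEquiv.mk' (fun p => pt (p 0) (-p 1)) (fun p => pt (p 0) (-p 1))
    (fun p => by ext i; fin_cases i <;> simp)
    (Isometry.of_dist_eq fun p q => by rw [dist_pt, dist_eq_sqrt_coords]; ring_nf)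

theorem reflectX_pt (a b : ℝ) : reflectX (pt a b) = pt a (-b) := rfl

theorem pointReflection_pt (a b a' b' : ℝ) :
    AffineIsometryEquiv.pointReflection ℝ (pt a b) (pt a' b') = pt (2 * a - a') (2 * b - b') := by
  ext i; fin_cases i <;> simp [AffineIsometryEquiv.pointReflection_apply] <;> ring

theorem reflectX_image_T4 : reflectX '' T4 = T4 := by
  ext x; simp [T4, reflectX_pt]; tauto

theorem pointReflection_image_T4 :
    (AffineIsometryEquiv.pointReflection ℝ (pt (3 / 2) 0)) '' T4 = T4 := by
  ext x; simp [T4, pointReflection_pt]; norm_num; tauto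

theorem T5_eq_union : T5 = T4 ∪ {pt 3 √3} := by
  simp only [T4, T5, Set.insert_union, Set.singleton_union]

theorem exists_symmetry_T4_red_apex {c : Plane → Color} (hred : NoRedL2 c) (hblue : ¬HasBlueL5 c)
    (hT4 : ∀ z ∈ T4, c z = Color.red) :
    ∃ g : Plane ≃ᵢ Plane, g '' T4 = T4 ∧ c (g (pt 3 √3)) = Color.red := by
  rcases red_apex_of_red hred hblue (hT4 _ (by simp [T4])) (hT4 _ (by simp [T4])) with h | h | h
  · exact ⟨IsometryEquiv.refl _, Set.image_id _, h⟩
  · exact ⟨reflectX, reflectX_image_T4, h⟩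
  · refine ⟨(AffineIsometryEquiv.pointReflection ℝ (pt (3 / 2) 0)).toIsometryEquiv,
      pointReflection_image_T4, ?_⟩
    norm_num [pointReflection_pt]
    exact h

/-- no red ℓ₂ and no blue ℓ₅; if A, B, C, D are red points forming
a congruent copy of 𝔗₄, then there is a red point E such that A, B, C, D, E
form a congruent copy of 𝔗₅. -/
theorem stmt_5 (c : Plane → Color) (hred : NoRedL2 c) (hblue : ¬ HasBlueL5 c)
    (A B C D : Plane) (hA : c A = Color.red) (hB : c B = Color.red)
    (hC : c C = Color.red) (hD : c D = Color.red)
    (hcong : ∃ f : Plane ≃ᵢ Plane, f '' T4 = {A, B, C, D}) :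
    ∃ E : Plane, c E = Color.red ∧
      ∃ g : Plane ≃ᵢ Plane, g '' T5 = {A, B, C, D, E} := by
  obtain ⟨f, hf⟩ := hcong
  have hT4 : ∀ z ∈ T4, (c ∘ f) z = Color.red := by
    intro z hz
    have hfz : f z ∈ ({A, B, C, D} : Set Plane) := hf ▸ Set.mem_image_of_mem f hz
    simp only [Set.mem_insert_iff, Set.mem_singleton_iff] at hfz
    rcases hfz with h | h | h | h <;> simp only [Function.comp_apply, h, hA, hB, hC, hD]
  obtain ⟨g, hg, hE⟩ := exists_symmetry_T4_red_apex (hred.comp f.isometry)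
    (fun h => hblue (h.of_comp f)) hT4
  refine ⟨f (g (pt 3 √3)), hE, g.trans f, ?_⟩
  have hgf : ⇑(g.trans f) = f ∘ g := rfl
  rw [T5_eq_union, Set.image_union, hgf, Set.image_comp, hg, hf, Set.image_singleton]
  simp only [Set.insert_union, Set.singleton_union, Function.comp_apply]
end

section
/- Let the Euclidean plane ℝ² be coloured in red and blue so that there is no red ℓ₂ and no blue ℓ₅. Let 𝔏 = {p + m·u + n·v : m, n ∈ ℤ} be a unit triangular lattice, where u, v are unit vectors with ⟨u,v⟩ = 1/2. Suppose 𝔏 does not contain three red points forming an equilateral triangle with side length √3. Then the colouring of 𝔏 is the unique colouring of Figure 8: there exist a point b ∈ 𝔏 and unit vectors u', v' with ⟨u',v'⟩ = 1/2 and 𝔏 = {b + m·u' + n·v' : m, n ∈ ℤ} such that a point x of 𝔏 is red if and only if x ∈ b + t + m·(2v'−u') + 5k·u' for some m, k ∈ ℤ and some t ∈ {0, 2u'+v'}; all other points of 𝔏 are blue. -/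
/-- `triNormSq z = ‖z.1 • u + z.2 • v‖²` whenever `u`, `v` are unit vectors at angle `60°`. -/
def triNormSq (z : ℤ × ℤ) : ℤ := z.1 ^ 2 + z.1 * z.2 + z.2 ^ 2

/-- The red points, in lattice coordinates, of a colouring of a unit triangular lattice with no
red `ℓ₂`, no blue `ℓ₅` and no red equilateral triangle of side `√3`. -/
structure IsAdmissible (R : Set (ℤ × ℤ)) : Prop where
  triNormSq_sub_ne_one : ∀ x ∈ R, ∀ y ∈ R, triNormSq (x - y) ≠ 1
  exists_mem_window : ∀ x d, triNormSq d = 1 → ∃ k : Fin 5, x + (k : ℤ) • d ∈ R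
  not_triangle : ∀ x ∈ R, ∀ y ∈ R, ∀ z ∈ R,
    triNormSq (x - y) = 3 → triNormSq (y - z) = 3 → triNormSq (x - z) = 3 → False

namespace IsAdmissible

variable {R : Set (ℤ × ℤ)}

theorem preimage_affine (hR : IsAdmissible R) (c : ℤ × ℤ) (g : ℤ × ℤ →+ ℤ × ℤ)
    (hg : ∀ z, triNormSq (g z) = triNormSq z) : IsAdmissible ((c + g ·) ⁻¹' R) where
  triNormSq_sub_ne_one x hx y hy := by
    simpa [← map_sub, hg] using hR.triNormSq_sub_ne_one _ hx _ hy
  exists_mem_window x d hd := by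
    obtain ⟨k, hk⟩ := hR.exists_mem_window (c + g x) (g d) (by rwa [hg])
    exact ⟨k, by simpa only [Set.mem_preimage, map_add, map_zsmul, add_assoc] using hk⟩
  not_triangle x hx y hy z hz := by
    simpa [← map_sub, hg] using hR.not_triangle _ hx _ hy _ hz

theorem preimage_add (hR : IsAdmissible R) (c : ℤ × ℤ) : IsAdmissible ((c + ·) ⁻¹' R) :=
  hR.preimage_affine c (AddMonoidHom.id _) fun _ => rfl

theorem preimage_add_neg (hR : IsAdmissible R) (c : ℤ × ℤ) : IsAdmissible ((c + -·) ⁻¹' R) :=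
  hR.preimage_affine c (-AddMonoidHom.id _) fun z => by simp [triNormSq]

theorem false_of_triNormSq_sub_eq_one (hR : IsAdmissible R) {x y : ℤ × ℤ} (hx : x ∈ R) (hy : y ∈ R)
    (h : triNormSq (x - y) = 1 := by decide) : False :=
  hR.triNormSq_sub_ne_one x hx y hy h

theorem false_of_triangle (hR : IsAdmissible R) {x y z : ℤ × ℤ} (hx : x ∈ R) (hy : y ∈ R)
    (hz : z ∈ R) (hxy : triNormSq (x - y) = 3 := by decide)
    (hyz : triNormSq (y - z) = 3 := by decide) (hxz : triNormSq (x - z) = 3 := by decide) :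
    False :=
  hR.not_triangle x hx y hy z hz hxy hyz hxz

theorem mem_three_neg_two (hR : IsAdmissible R) (h₀ : 0 ∈ R) (h₁ : (1, 1) ∈ R) :
    (3, -2) ∈ R := by
  obtain ⟨k, hk⟩ := hR.exists_mem_window (-1, 2) (1, -1) (by decide)
  fin_cases k <;> norm_num at hk
  · exact (hR.false_of_triangle h₀ h₁ hk).elim
  · exact (hR.false_of_triNormSq_sub_eq_one hk h₀).elim
  · exact (hR.false_of_triNormSq_sub_eq_one hk h₀).elim
  · exact (hR.false_of_triangle h₀ h₁ hk).elim
  · exact hk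

theorem reflect (hR : IsAdmissible R) (h₀ : 0 ∈ R) (h₁ : (1, 1) ∈ R) :
    IsAdmissible (((1, 1) + -·) ⁻¹' R) ∧ 0 ∈ ((1, 1) + -·) ⁻¹' R ∧
      (1, 1) ∈ ((1, 1) + -·) ⁻¹' R :=
  ⟨hR.preimage_add_neg _, by simpa using h₁, by simpa [Prod.mk_zero_zero] using h₀⟩

theorem mem_neg_two_three (hR : IsAdmissible R) (h₀ : 0 ∈ R) (h₁ : (1, 1) ∈ R) :
    (-2, 3) ∈ R := by
  obtain ⟨hR', h₀', h₁'⟩ := hR.reflect h₀ h₁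
  simpa using hR'.mem_three_neg_two h₀' h₁'

theorem mem_two_two (hR : IsAdmissible R) (h₀ : 0 ∈ R) (h₁ : (1, 1) ∈ R) : (2, 2) ∈ R := by
  have h₂ := hR.mem_neg_two_three h₀ h₁
  obtain ⟨k, hk⟩ := hR.exists_mem_window (-2, 2) (1, 0) (by decide)
  fin_cases k <;> norm_num at hk
  · exact (hR.false_of_triNormSq_sub_eq_one hk h₂).elim
  · exact (hR.false_of_triangle h₀ h₁ hk).elim
  · exact (hR.false_of_triNormSq_sub_eq_one hk h₁).elim
  · exact (hR.false_of_triNormSq_sub_eq_one hk h₁).elim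
  · exact hk

theorem mem_neg_one_neg_one (hR : IsAdmissible R) (h₀ : 0 ∈ R) (h₁ : (1, 1) ∈ R) :
    (-1, -1) ∈ R := by
  obtain ⟨hR', h₀', h₁'⟩ := hR.reflect h₀ h₁
  simpa using hR'.mem_two_two h₀' h₁'

theorem mem_diag (hR : IsAdmissible R) (h₀ : 0 ∈ R) (h₁ : (1, 1) ∈ R) (k : ℤ) :
    (k, k) ∈ R := by
  suffices ∀ k : ℤ, (k, k) ∈ R ∧ (k + 1, k + 1) ∈ R from (this k).1
  intro k
  induction k using Int.induction_on with
  | zero => simpa using ⟨h₀, h₁⟩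
  | succ k ih =>
    have h := (hR.preimage_add (k, k)).mem_two_two (by simpa using ih.1) ih.2
    simp only [Set.mem_preimage, Prod.mk_add_mk] at h
    exact ⟨ih.2, by convert h using 2 <;> ring⟩
  | pred k ih =>
    have h := (hR.preimage_add (-k, -k)).mem_neg_one_neg_one (by simpa using ih.1) ih.2
    simp only [Set.mem_preimage, Prod.mk_add_mk] at h
    exact ⟨by convert h using 2 <;> ring, by convert ih.1 using 2 <;> ring⟩

theorem mem_add_three_sub_two (hR : IsAdmissible R) (h₀ : 0 ∈ R) (h₁ : (1, 1) ∈ R) (k : ℤ) :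
    (k + 3, k - 2) ∈ R := by
  have h := (hR.preimage_add (k, k)).mem_three_neg_two (by simpa using hR.mem_diag h₀ h₁ k)
    (hR.mem_diag h₀ h₁ (k + 1))
  simpa only [Set.mem_preimage, Prod.mk_add_mk, sub_eq_add_neg] using h

theorem mem_sub_two_add_three (hR : IsAdmissible R) (h₀ : 0 ∈ R) (h₁ : (1, 1) ∈ R) (k : ℤ) :
    (k - 2, k + 3) ∈ R := by
  have h := (hR.preimage_add (k, k)).mem_neg_two_three (by simpa using hR.mem_diag h₀ h₁ k)
    (hR.mem_diag h₀ h₁ (k + 1))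
  simpa only [Set.mem_preimage, Prod.mk_add_mk, sub_eq_add_neg] using h

theorem mem_of_five_dvd (hR : IsAdmissible R) (h₀ : 0 ∈ R) (h₁ : (1, 1) ∈ R) {a b : ℤ}
    (h : 5 ∣ a - b) : (a, b) ∈ R := by
  obtain ⟨j, hj⟩ := h
  suffices ∀ j k : ℤ, (5 * j + k, k) ∈ R by convert this j b using 2; omega
  intro j
  induction j using Int.induction_on with
  | zero => simpa using hR.mem_diag h₀ h₁
  | succ j ih =>
    intro k
    have h := (hR.preimage_add (5 * j, 0)).mem_add_three_sub_two (by simpa using ih 0)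
      (by simpa using ih 1) (k + 2)
    simp only [Set.mem_preimage, Prod.mk_add_mk] at h
    convert h using 2 <;> ring
  | pred j ih =>
    intro k
    have h := (hR.preimage_add (5 * -j, 0)).mem_sub_two_add_three (by simpa using ih 0)
      (by simpa using ih 1) (k - 3)
    simp only [Set.mem_preimage, Prod.mk_add_mk] at h
    convert h using 2 <;> ring

theorem mem_iff_five_dvd (hR : IsAdmissible R) (h₀ : 0 ∈ R) (h₁ : (1, 1) ∈ R) (a b : ℤ) :
    (a, b) ∈ R ↔ 5 ∣ a - b := by
  refine ⟨fun h => ?_, hR.mem_of_five_dvd h₀ h₁⟩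
  by_contra hab
  obtain ⟨a', b', hdvd, hunit⟩ :
      ∃ a' b' : ℤ, 5 ∣ a' - b' ∧ triNormSq ((a, b) - (a', b')) = 1 := by
    have : (a - b) % 5 = 1 ∨ (a - b) % 5 = 2 ∨ (a - b) % 5 = 3 ∨ (a - b) % 5 = 4 := by omega
    rcases this with h5 | h5 | h5 | h5
    · exact ⟨a - 1, b, by omega, by norm_num [triNormSq]⟩
    · exact ⟨a - 1, b + 1, by omega, by norm_num [triNormSq]⟩
    · exact ⟨a + 1, b - 1, by omega, by norm_num [triNormSq]⟩
    · exact ⟨a + 1, b, by omega, by norm_num [triNormSq]⟩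
  exact hR.false_of_triNormSq_sub_eq_one h (hR.mem_of_five_dvd h₀ h₁ hdvd) hunit

theorem exists_sqrt3_pair_of_zero_mem (hR : IsAdmissible R) (h₀ : 0 ∈ R) :
    ∃ x ∈ R, x + (1, 1) ∈ R ∨ x + (2, -1) ∈ R ∨ x + (-1, 2) ∈ R := by
  by_contra! h
  have h₁ : (2, 1) ∈ R := by
    obtain ⟨k, hk⟩ := hR.exists_mem_window (-2, 1) (1, 0) (by decide)
    fin_cases k <;> norm_num at hk
    · exact ((h _ hk).2.1 (by simpa [Prod.mk_zero_zero] using h₀)).elim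
    · exact (hR.false_of_triNormSq_sub_eq_one hk h₀).elim
    · exact (hR.false_of_triNormSq_sub_eq_one hk h₀).elim
    · exact ((h _ h₀).1 (by simpa using hk)).elim
    · exact hk
  have h₂ : (1, 2) ∈ R := by
    obtain ⟨k, hk⟩ := hR.exists_mem_window (1, -2) (0, 1) (by decide)
    fin_cases k <;> norm_num at hk
    · exact ((h _ hk).2.2 (by simpa [Prod.mk_zero_zero] using h₀)).elim
    · exact (hR.false_of_triNormSq_sub_eq_one hk h₀).elim
    · exact (hR.false_of_triNormSq_sub_eq_one hk h₀).elim
    · exact ((h _ h₀).1 (by simpa using hk)).elim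
    · exact hk
  exact hR.false_of_triNormSq_sub_eq_one h₁ h₂

theorem exists_sqrt3_pair (hR : IsAdmissible R) :
    ∃ x ∈ R, x + (1, 1) ∈ R ∨ x + (2, -1) ∈ R ∨ x + (-1, 2) ∈ R := by
  obtain ⟨k, hk⟩ := hR.exists_mem_window 0 (1, 0) (by decide)
  obtain ⟨x, hx, hpair⟩ := (hR.preimage_add _).exists_sqrt3_pair_of_zero_mem (by simpa using hk)
  exact ⟨_, hx, by simpa only [Set.mem_preimage, add_assoc] using hpair⟩

end IsAdmissible

theorem Color.eq_blue_of_ne_red {a : Color} (h : a ≠ Color.red) : a = Color.blue := by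
  cases a <;> simp_all

structure IsUnitTriBasis (u v : Plane) : Prop where
  norm_left : ‖u‖ = 1
  norm_right : ‖v‖ = 1
  inner_eq : (inner ℝ u v : ℝ) = 1 / 2

def triLattice (q u v : Plane) : Set Plane :=
  {x | ∃ m n : ℤ, x = q + (m : ℝ) • u + (n : ℝ) • v}

def latticePoint (q u v : Plane) (z : ℤ × ℤ) : Plane :=
  q + (z.1 : ℝ) • u + (z.2 : ℝ) • v

def NoRedSqrt3Triangle (c : Plane → Color) (L : Set Plane) : Prop :=
  ¬ ∃ A B C : Plane, A ∈ L ∧ B ∈ L ∧ C ∈ L ∧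
    c A = Color.red ∧ c B = Color.red ∧ c C = Color.red ∧
    dist A B = Real.sqrt 3 ∧ dist B C = Real.sqrt 3 ∧ dist A C = Real.sqrt 3

def IsFigure8Colouring (c : Plane → Color) (L : Set Plane) : Prop :=
  ∃ b ∈ L, ∃ u' v' : Plane, ‖u'‖ = 1 ∧ ‖v'‖ = 1 ∧ (inner ℝ u' v' : ℝ) = 1 / 2 ∧
    L = triLattice b u' v' ∧
    ∀ x ∈ L, (c x = Color.red ↔
      ∃ m k : ℤ, ∃ t ∈ ({0, (2 : ℝ) • u' + v'} : Set Plane),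
        x = b + t + (m : ℝ) • ((2 : ℝ) • v' - u') + ((5 * k : ℤ) : ℝ) • u')

namespace IsUnitTriBasis

variable {u v : Plane}

theorem norm_smul_add_smul (hb : IsUnitTriBasis u v) (a b : ℝ) :
    ‖a • u + b • v‖ = √(a ^ 2 + a * b + b ^ 2) := by
  have huu : (inner ℝ u u : ℝ) = 1 := by rw [real_inner_self_eq_norm_sq, hb.norm_left]; norm_num
  have hvv : (inner ℝ v v : ℝ) = 1 := by rw [real_inner_self_eq_norm_sq, hb.norm_right]; norm_num
  rw [← Real.sqrt_sq (norm_nonneg _), ← real_inner_self_eq_norm_sq]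
  congr 1
  simp only [inner_add_left, inner_add_right, real_inner_smul_left, real_inner_smul_right,
    huu, hvv, real_inner_comm u v, hb.inner_eq]
  ring

theorem norm_sub (hb : IsUnitTriBasis u v) : ‖u - v‖ = 1 := by
  rw [show u - v = (1 : ℝ) • u + (-1 : ℝ) • v by module, hb.norm_smul_add_smul]
  norm_num

theorem rotate (hb : IsUnitTriBasis u v) : IsUnitTriBasis v (v - u) where
  norm_left := hb.norm_right
  norm_right := by rw [← norm_neg, neg_sub, hb.norm_sub]
  inner_eq := by
    rw [inner_sub_right, real_inner_self_eq_norm_sq, hb.norm_right, real_inner_comm, hb.inner_eq]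
    norm_num

theorem rotate_inv (hb : IsUnitTriBasis u v) : IsUnitTriBasis (u - v) u where
  norm_left := hb.norm_sub
  norm_right := hb.norm_left
  inner_eq := by
    rw [inner_sub_left, real_inner_self_eq_norm_sq, hb.norm_left, real_inner_comm, hb.inner_eq]
    norm_num

theorem norm_intCast_smul_add_intCast_smul (hb : IsUnitTriBasis u v) (z : ℤ × ℤ) :
    ‖(z.1 : ℝ) • u + (z.2 : ℝ) • v‖ = √(triNormSq z) := by
  rw [hb.norm_smul_add_smul]
  simp [triNormSq]

theorem dist_latticePoint (hb : IsUnitTriBasis u v) (q : Plane) (z w : ℤ × ℤ) :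
    dist (latticePoint q u v z) (latticePoint q u v w) = √(triNormSq (z - w)) := by
  rw [dist_eq_norm, ← hb.norm_intCast_smul_add_intCast_smul]
  congr 1
  simp only [latticePoint, Prod.fst_sub, Prod.snd_sub]
  push_cast
  module

end IsUnitTriBasis

theorem latticePoint_mem_triLattice (q u v : Plane) (z : ℤ × ℤ) :
    latticePoint q u v z ∈ triLattice q u v :=
  ⟨z.1, z.2, rfl⟩

theorem latticePoint_add (q u v : Plane) (z w : ℤ × ℤ) :
    latticePoint q u v (z + w) = latticePoint (latticePoint q u v z) u v w := by
  simp only [latticePoint, Prod.fst_add, Prod.snd_add]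
  push_cast
  module

theorem latticePoint_add_zsmul (q u v : Plane) (z d : ℤ × ℤ) (n : ℤ) :
    latticePoint q u v (z + n • d) =
      latticePoint q u v z + (n : ℝ) • ((d.1 : ℝ) • u + (d.2 : ℝ) • v) := by
  simp only [latticePoint, Prod.fst_add, Prod.snd_add, Prod.smul_fst, Prod.smul_snd, smul_eq_mul]
  push_cast
  module

theorem triLattice_eq_of_mem {q u v x : Plane} (hx : x ∈ triLattice q u v) :
    triLattice x u v = triLattice q u v := by
  obtain ⟨m, n, rfl⟩ := hx
  ext y
  constructor
  · rintro ⟨a, b, rfl⟩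
    exact ⟨m + a, n + b, by push_cast; module⟩
  · rintro ⟨a, b, rfl⟩
    exact ⟨a - m, b - n, by push_cast; module⟩

theorem triLattice_rotate (q u v : Plane) : triLattice q v (v - u) = triLattice q u v := by
  ext y
  constructor
  · rintro ⟨a, b, rfl⟩
    exact ⟨-b, a + b, by push_cast; module⟩
  · rintro ⟨a, b, rfl⟩
    exact ⟨a + b, -a, by push_cast; module⟩

theorem triLattice_rotate_inv (q u v : Plane) : triLattice q (u - v) u = triLattice q u v := by
  rw [← triLattice_rotate, sub_sub_cancel]

section Colouring

variable {c : Plane → Color} {q u v : Plane}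

theorem isAdmissible_red (hred : NoRedL2 c) (hblue : ¬ HasBlueL5 c) (hb : IsUnitTriBasis u v)
    (hnotri : NoRedSqrt3Triangle c (triLattice q u v)) :
    IsAdmissible {z | c (latticePoint q u v z) = Color.red} where
  triNormSq_sub_ne_one x hx y hy h :=
    hred _ _ hx hy (by rw [hb.dist_latticePoint, h, Int.cast_one, Real.sqrt_one])
  exists_mem_window x d hd := by
    by_contra! h
    refine hblue ⟨latticePoint q u v x, (d.1 : ℝ) • u + (d.2 : ℝ) • v, ?_, fun k => ?_⟩
    · rw [hb.norm_intCast_smul_add_intCast_smul, hd, Int.cast_one, Real.sqrt_one]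
    · have := Color.eq_blue_of_ne_red (h k)
      rwa [latticePoint_add_zsmul, Int.cast_natCast] at this
  not_triangle x hx y hy z hz hxy hyz hxz := by
    refine hnotri ⟨_, _, _, latticePoint_mem_triLattice q u v x,
      latticePoint_mem_triLattice q u v y, latticePoint_mem_triLattice q u v z,
      hx, hy, hz, ?_, ?_, ?_⟩ <;>
    simp only [hb.dist_latticePoint, hxy, hyz, hxz, Int.cast_ofNat]

/-- The three lattice directions of length `√3` appear as `u' + v'` for the bases
`(u', v') = (u, v), (u - v, u), (v, v - u)` of the same lattice. -/
theorem exists_red_sqrt3_pair (hred : NoRedL2 c) (hblue : ¬ HasBlueL5 c)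
    (hb : IsUnitTriBasis u v) (hnotri : NoRedSqrt3Triangle c (triLattice q u v)) :
    ∃ x ∈ triLattice q u v, c x = Color.red ∧ (c (x + (u + v)) = Color.red ∨
      c (x + ((u - v) + u)) = Color.red ∨ c (x + (v + (v - u))) = Color.red) := by
  obtain ⟨z, hz, hpair⟩ := (isAdmissible_red hred hblue hb hnotri).exists_sqrt3_pair
  refine ⟨_, latticePoint_mem_triLattice q u v z, hz, ?_⟩
  simp only [Set.mem_ofPred_eq, latticePoint_add] at hpair
  rcases hpair with h | h | h
  · exact Or.inl (by convert h using 2; simp [latticePoint]; module)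
  · exact Or.inr (Or.inl (by convert h using 2; simp [latticePoint]; module))
  · exact Or.inr (Or.inr (by convert h using 2; simp [latticePoint]; module))

/-- Take `u' = u - v`, `v' = u`: the point `x + m • u' + n • v'` has `(u, v)`-coordinates
`(m + n, -m)`, so the condition `5 ∣ a - b` becomes `5 ∣ 2 * m + n`. -/
theorem isFigure8Colouring_of_red_iff {x : Plane} (hb : IsUnitTriBasis u v)
    (h : ∀ a b : ℤ, c (latticePoint x u v (a, b)) = Color.red ↔ 5 ∣ a - b) :
    IsFigure8Colouring c (triLattice x u v) := by
  refine ⟨x, ⟨0, 0, by simp⟩, u - v, u, hb.rotate_inv.norm_left, hb.rotate_inv.norm_right,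
    hb.rotate_inv.inner_eq, (triLattice_rotate_inv x u v).symm, fun y hy => ⟨fun hy' => ?_, ?_⟩⟩
  · rw [← triLattice_rotate_inv] at hy
    obtain ⟨m, n, rfl⟩ := hy
    rw [show x + (m : ℝ) • (u - v) + (n : ℝ) • u = latticePoint x u v (m + n, -m) by
      simp only [latticePoint]; push_cast; module, h] at hy'
    rcases Int.even_or_odd' n with ⟨j, rfl | rfl⟩
    · obtain ⟨k, rfl⟩ : ∃ k, m = 5 * k - j := ⟨(m + j) / 5, by omega⟩
      exact ⟨j, k, 0, by simp, by push_cast; module⟩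
    · obtain ⟨k, rfl⟩ : ∃ k, m = 5 * k - j + 2 := ⟨(m + j - 2) / 5, by omega⟩
      exact ⟨j, k, (2 : ℝ) • (u - v) + u, by simp, by push_cast; module⟩
  · rintro ⟨m, k, t, ht, rfl⟩
    rcases ht with rfl | rfl
    · rw [show x + 0 + (m : ℝ) • ((2 : ℝ) • u - (u - v)) + ((5 * k : ℤ) : ℝ) • (u - v) =
          latticePoint x u v (m + 5 * k, m - 5 * k) by
          simp only [latticePoint]; push_cast; module, h]
      omega
    · rw [show x + ((2 : ℝ) • (u - v) + u) + (m : ℝ) • ((2 : ℝ) • u - (u - v)) +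
          ((5 * k : ℤ) : ℝ) • (u - v) = latticePoint x u v (3 + m + 5 * k, -2 + m - 5 * k) by
          simp only [latticePoint]; push_cast; module, h]
      omega

theorem isFigure8Colouring_of_red_pair {x : Plane} {L : Set Plane} (hred : NoRedL2 c)
    (hblue : ¬ HasBlueL5 c) (hb : IsUnitTriBasis u v) (hL : L = triLattice q u v)
    (hnotri : NoRedSqrt3Triangle c L) (hxL : x ∈ L) (hx : c x = Color.red)
    (hxuv : c (x + (u + v)) = Color.red) : IsFigure8Colouring c L := by
  subst hL
  rw [← triLattice_eq_of_mem hxL] at hnotri ⊢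
  have hR := isAdmissible_red hred hblue hb hnotri
  exact isFigure8Colouring_of_red_iff hb fun a b =>
    hR.mem_iff_five_dvd (by simpa [latticePoint]) (by simpa [latticePoint, add_assoc]) a b

end Colouring

/-- no red ℓ₂ and no blue ℓ₅; if a unit triangular lattice 𝔏
contains no red equilateral triangle of side √3, then the colouring of 𝔏 is the
unique colouring of Figure 8. -/
theorem stmt_11 (c : Plane → Color) (hred : NoRedL2 c) (hblue : ¬ HasBlueL5 c)
    (p u v : Plane) (hu : ‖u‖ = 1) (hv : ‖v‖ = 1) (huv : (inner ℝ u v : ℝ) = 1 / 2)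
    (L : Set Plane) (hL : L = {x : Plane | ∃ m n : ℤ, x = p + (m : ℝ) • u + (n : ℝ) • v})
    (hnotri : ¬ ∃ A B C : Plane, A ∈ L ∧ B ∈ L ∧ C ∈ L ∧
      c A = Color.red ∧ c B = Color.red ∧ c C = Color.red ∧
      dist A B = Real.sqrt 3 ∧ dist B C = Real.sqrt 3 ∧ dist A C = Real.sqrt 3) :
    ∃ b ∈ L, ∃ u' v' : Plane, ‖u'‖ = 1 ∧ ‖v'‖ = 1 ∧ (inner ℝ u' v' : ℝ) = 1 / 2 ∧
      L = {x : Plane | ∃ m n : ℤ, x = b + (m : ℝ) • u' + (n : ℝ) • v'} ∧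
      ∀ x ∈ L, (c x = Color.red ↔
        ∃ m k : ℤ, ∃ t ∈ ({0, (2 : ℝ) • u' + v'} : Set Plane),
          x = b + t + (m : ℝ) • ((2 : ℝ) • v' - u') + ((5 * k : ℤ) : ℝ) • u') := by
  have hb : IsUnitTriBasis u v := ⟨hu, hv, huv⟩
  subst hL
  obtain ⟨x, hxL, hx, hpair | hpair | hpair⟩ := exists_red_sqrt3_pair hred hblue hb hnotri
  · exact isFigure8Colouring_of_red_pair hred hblue hb rfl hnotri hxL hx hpair
  · exact isFigure8Colouring_of_red_pair hred hblue hb.rotate_inv (triLattice_rotate_inv p u v).symm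
      hnotri hxL hx hpair
  · exact isFigure8Colouring_of_red_pair hred hblue hb.rotate (triLattice_rotate p u v).symm
      hnotri hxL hx hpair
end
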